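/- Let $\lambda > 0$ and $h(x,v) = \frac{\varepsilon}{2} M\left(\cos(\lambda^{1/4}(v-v_0))\cos(\lambda^{1/4}(x-x_0)) + 1\right)$ on the ball $B_\rho(x_0,v_0)$ where $\lambda^{1/4}\rho \le \pi/2$. Then the function $F(x,v,t) = e^{-\lambda t} h(x - vt, v)$ satisfies $F_t + vF_x - F_{vv} \le 0$ on the region where $|t| \le 1$ and the argument stays in $B_\rho$, provided $h_{vv} + t^2 h_{xx} - 2t h_{xt'} \ge -\lambda h$ holds (where derivatives are evaluated on the shifted profile), which is satisfied for $\lambda = (2\pi/\rho)^4$ sufficiently large. -/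

import Mathlib

/-!
By the chain rule, `F(x,v,t) = e^{-λt} h(x - vt, v)` satisfies
`F_t + v F_x - F_vv = e^{-λt} (-λ h - (h_vv + t² h_xx - 2t h_xv))` at `(x - vt, v)`:
the transport terms cancel and the second `v`-derivative of `v ↦ h(x - vt, v)` produces the
`t²` and mixed terms. So the profile inequality is exactly the sub-solution property.
For a separable profile `h(x,v) = f(v) g(x) + k`, such as the product-cosine one, every
derivative involved is explicit and the identity is a direct computation.
-/

/-- The product-cosine profile used to build a transported sub-solution. -/
noncomputable def cosProfile (ε M lam x₀ v₀ : ℝ) (x v : ℝ) : ℝ :=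
  ε / 2 * M * (Real.cos (lam ^ ((1:ℝ)/4) * (v - v₀)) * Real.cos (lam ^ ((1:ℝ)/4) * (x - x₀)) + 1)

open Real

/-- `F_t + v F_x - F_vv` for `F(x,v,t) = e^{-λt} h(x - vt, v)`. -/
noncomputable def transportedFokkerPlanck (h : ℝ → ℝ → ℝ) (lam x v t : ℝ) : ℝ :=
  deriv (fun τ => exp (-lam * τ) * h (x - v * τ) v) t +
      v * deriv (fun x' => exp (-lam * t) * h (x' - v * t) v) x -
    deriv (deriv (fun v' => exp (-lam * t) * h (x - v' * t) v')) v

/-- `h_vv + t² h_xx - 2t h_xv` at `(y, v)`. -/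
noncomputable def profileOperator (h : ℝ → ℝ → ℝ) (t y v : ℝ) : ℝ :=
  deriv (deriv (fun v' => h y v')) v + t ^ 2 * deriv (deriv (fun x' => h x' v)) y -
    2 * t * deriv (fun v' => deriv (fun x' => h x' v') y) v

section Separable

variable {f f' f'' g g' g'' : ℝ → ℝ}
  (hf : ∀ y, HasDerivAt f (f' y) y) (hf' : ∀ y, HasDerivAt f' (f'' y) y)
  (hg : ∀ y, HasDerivAt g (g' y) y) (hg' : ∀ y, HasDerivAt g' (g'' y) y)
include hf hf' hg hg'

theorem profileOperator_separable (k t y v : ℝ) :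
    profileOperator (fun x v => f v * g x + k) t y v =
      f'' v * g y + t ^ 2 * (f v * g'' y) - 2 * t * (f' v * g' y) := by
  have hvv : deriv (fun v' => f v' * g y + k) = fun v' => f' v' * g y :=
    funext fun v' => (((hf v').mul_const (g y)).add_const k).deriv
  have hxx : deriv (fun x' => f v * g x' + k) = fun x' => f v * g' x' :=
    funext fun x' => (((hg x').const_mul (f v)).add_const k).deriv
  have hx : (fun v' => deriv (fun x' => f v' * g x' + k) y) = fun v' => f v' * g' y :=
    funext fun v' => (((hg y).const_mul (f v')).add_const k).deriv
  simp only [profileOperator, hvv, hxx, hx]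
  rw [((hf' v).mul_const (g y)).deriv, ((hg' y).const_mul (f v)).deriv,
    ((hf v).mul_const (g' y)).deriv]

theorem transportedFokkerPlanck_separable (k lam x v t : ℝ) :
    transportedFokkerPlanck (fun x v => f v * g x + k) lam x v t =
      exp (-lam * t) * (-lam * (f v * g (x - v * t) + k) -
        profileOperator (fun x v => f v * g x + k) t (x - v * t) v) := by
  have hexp : HasDerivAt (fun τ => exp (-lam * τ)) (exp (-lam * t) * -lam) t := by
    simpa using ((hasDerivAt_id t).const_mul (-lam)).exp
  have hg_time : HasDerivAt (fun τ => g (x - v * τ)) (g' (x - v * t) * -v) t :=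
    (hg _).comp t ((hasDerivAt_const_mul v).const_sub x)
  have hg_space : HasDerivAt (fun x' => g (x' - v * t)) (g' (x - v * t)) x :=
    (hg _).comp_sub_const x (v * t)
  have hg_vel : ∀ (G G' : ℝ → ℝ), (∀ y, HasDerivAt G (G' y) y) → ∀ w,
      HasDerivAt (fun v' => G (x - v' * t)) (G' (x - w * t) * -t) w :=
    fun G G' hG w => (hG _).comp w ((hasDerivAt_mul_const t).const_sub x)
  have hvel : deriv (fun v' => exp (-lam * t) * (f v' * g (x - v' * t) + k)) =
      fun v' => exp (-lam * t) *
        (f' v' * g (x - v' * t) + f v' * (g' (x - v' * t) * -t)) :=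
    funext fun w => ((((hf w).mul (hg_vel g g' hg w)).add_const k).const_mul _).deriv
  have htime : deriv (fun τ => exp (-lam * τ) * (f v * g (x - v * τ) + k)) t =
      exp (-lam * t) * -lam * (f v * g (x - v * t) + k) +
        exp (-lam * t) * (f v * (g' (x - v * t) * -v)) :=
    (hexp.mul ((hg_time.const_mul (f v)).add_const k)).deriv
  have hspace : deriv (fun x' => exp (-lam * t) * (f v * g (x' - v * t) + k)) x =
      exp (-lam * t) * (f v * g' (x - v * t)) :=
    (((hg_space.const_mul (f v)).add_const k).const_mul _).deriv
  have hvel₂ : deriv (fun v' => exp (-lam * t) *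
        (f' v' * g (x - v' * t) + f v' * (g' (x - v' * t) * -t))) v =
      exp (-lam * t) * (f'' v * g (x - v * t) + f' v * (g' (x - v * t) * -t) +
        (f' v * (g' (x - v * t) * -t) + f v * (g'' (x - v * t) * -t * -t))) :=
    ((((hf' v).mul (hg_vel g g' hg v)).add
      ((hf v).mul ((hg_vel g' g'' hg' v).mul_const (-t)))).const_mul _).deriv
  simp only [transportedFokkerPlanck, hvel]
  rw [htime, hspace, hvel₂, profileOperator_separable hf hf' hg hg']
  ring

theorem transportedFokkerPlanck_nonpos_of_separable {k lam x v t : ℝ}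
    (hprofile : profileOperator (fun x v => f v * g x + k) t (x - v * t) v ≥
      -lam * (f v * g (x - v * t) + k)) :
    transportedFokkerPlanck (fun x v => f v * g x + k) lam x v t ≤ 0 := by
  rw [transportedFokkerPlanck_separable hf hf' hg hg']
  exact mul_nonpos_of_nonneg_of_nonpos (exp_pos _).le (by linarith)

end Separable

theorem hasDerivAt_cos_mul_sub (a b y : ℝ) :
    HasDerivAt (fun z => cos (a * (z - b))) (-(a * sin (a * (y - b)))) y := by
  simpa [mul_comm] using (((hasDerivAt_id y).sub_const b).const_mul a).cos

theorem hasDerivAt_sin_mul_sub (a b y : ℝ) :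
    HasDerivAt (fun z => sin (a * (z - b))) (a * cos (a * (y - b))) y := by
  simpa [mul_comm] using (((hasDerivAt_id y).sub_const b).const_mul a).sin

theorem cosProfile_eq_separable (ε M lam x₀ v₀ : ℝ) :
    cosProfile ε M lam x₀ v₀ = fun x v =>
      ε / 2 * M * cos (lam ^ ((1:ℝ)/4) * (v - v₀)) * cos (lam ^ ((1:ℝ)/4) * (x - x₀)) +
        ε / 2 * M := by
  funext x v
  rw [cosProfile]
  ring

theorem stmt_16_general (ε M lam ρ x₀ v₀ : ℝ) :
    ∀ x v t : ℝ, |t| ≤ 1 →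
      ((x - v * t, v) : ℝ × ℝ) ∈ Metric.ball ((x₀, v₀) : ℝ × ℝ) ρ →
      (deriv (deriv (fun v' => cosProfile ε M lam x₀ v₀ (x - v * t) v')) v +
          t ^ 2 * deriv (deriv (fun x' => cosProfile ε M lam x₀ v₀ x' v)) (x - v * t) -
          2 * t * deriv (fun v' =>
            deriv (fun x' => cosProfile ε M lam x₀ v₀ x' v') (x - v * t)) v ≥
        -lam * cosProfile ε M lam x₀ v₀ (x - v * t) v) →
      deriv (fun τ => Real.exp (-lam * τ) * cosProfile ε M lam x₀ v₀ (x - v * τ) v) t +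
          v * deriv (fun x' =>
            Real.exp (-lam * t) * cosProfile ε M lam x₀ v₀ (x' - v * t) v) x -
          deriv (deriv (fun v' =>
            Real.exp (-lam * t) * cosProfile ε M lam x₀ v₀ (x - v' * t) v')) v ≤ 0 := by
  intro x v t _ _ hprofile
  change profileOperator (cosProfile ε M lam x₀ v₀) t (x - v * t) v ≥ _ at hprofile
  change transportedFokkerPlanck (cosProfile ε M lam x₀ v₀) lam x v t ≤ 0
  rw [cosProfile_eq_separable] at hprofile ⊢
  set a := lam ^ ((1:ℝ)/4)
  exact transportedFokkerPlanck_nonpos_of_separable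
    (fun y => (hasDerivAt_cos_mul_sub a v₀ y).const_mul (ε / 2 * M))
    (fun y => ((hasDerivAt_sin_mul_sub a v₀ y).const_mul a).neg.const_mul (ε / 2 * M))
    (hasDerivAt_cos_mul_sub a x₀) (fun y => (hasDerivAt_sin_mul_sub a x₀ y).const_mul a |>.neg)
    hprofile

/-- Substituting `F(x,v,t) = e^{-λt} h(x - vt, v)` into the Fokker–Planck operator:
wherever the profile inequality `h_vv + t² h_xx - 2t h_xv ≥ -λ h` holds (evaluated
at the shifted point `(x - vt, v)`, in the ball and for `|t| ≤ 1`), the function `F`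
satisfies `F_t + v F_x - F_vv ≤ 0`. -/
theorem stmt_16 (ε M lam ρ x₀ v₀ : ℝ) (hε : 0 < ε) (hM : 0 < M) (hlam : 0 < lam)
    (hρ : 0 < ρ) (hρlam : lam ^ ((1:ℝ)/4) * ρ ≤ Real.pi / 2) :
    ∀ x v t : ℝ, |t| ≤ 1 →
      ((x - v * t, v) : ℝ × ℝ) ∈ Metric.ball ((x₀, v₀) : ℝ × ℝ) ρ →
      (deriv (deriv (fun v' => cosProfile ε M lam x₀ v₀ (x - v * t) v')) v +
          t ^ 2 * deriv (deriv (fun x' => cosProfile ε M lam x₀ v₀ x' v)) (x - v * t) -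
          2 * t * deriv (fun v' =>
            deriv (fun x' => cosProfile ε M lam x₀ v₀ x' v') (x - v * t)) v ≥
        -lam * cosProfile ε M lam x₀ v₀ (x - v * t) v) →
      deriv (fun τ => Real.exp (-lam * τ) * cosProfile ε M lam x₀ v₀ (x - v * τ) v) t +
          v * deriv (fun x' =>
            Real.exp (-lam * t) * cosProfile ε M lam x₀ v₀ (x' - v * t) v) x -
          deriv (deriv (fun v' =>
            Real.exp (-lam * t) * cosProfile ε M lam x₀ v₀ (x - v' * t) v')) v ≤ 0 :=
  stmt_16_general ε M lam ρ x₀ v₀
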